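/- arXiv:math/0702838 — 4 statements merged into one kernel-verified Lean document; each statement's English description precedes it below -/
import Mathlib

section
/- Let B be a DG algebra, I a nilpotent DG ideal of B, and α, β ∈ MC(I). If g ∈ 1 + I^0 satisfies g·α = β (gauge action), then for any h ∈ I^{-1}, the element g' = g + d(h) + βh + hα also satisfies g'·α = β. -/
/-!
The condition `d g = g α - β g` is affine in `g` once `α` and `β` are fixed, so it suffices
that the correction `d h + β h + h α` solves the homogeneous equation `d x = x α - β x`.
This is the statement that `d h + β h + h α` is the differential of `h` twisted by `α` and
`β`: expanding with the Leibniz rule for the odd elements `β`, `h`, and using `d² = 0` and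
the Maurer–Cartan equations `d α = -α²`, `d β = -β²`, everything cancels.
-/

theorem map_mul_of_odd {k B : Type*} [Field k] [Ring B] [Algebra k B]
    {𝒜 : ℤ → Submodule k B} {d : B →ₗ[k] B}
    (hleib : ∀ i : ℤ, ∀ a ∈ 𝒜 i, ∀ b : B, d (a * b) = d a * b + ((-1 : k) ^ i) • (a * d b))
    {i : ℤ} (hi : Odd i) {a : B} (ha : a ∈ 𝒜 i) (b : B) :
    d (a * b) = d a * b - a * d b := by
  rw [hleib i a ha b, hi.neg_one_zpow, neg_one_smul, sub_eq_add_neg]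

theorem gauge_add_twisted_differential {B : Type*} [Ring B] (d : B →+ B) {α β g h : B}
    (hα : d α = -(α * α)) (hβ : d β = -(β * β)) (hg : d g = g * α - β * g)
    (hdd : d (d h) = 0) (hβh : d (β * h) = d β * h - β * d h)
    (hhα : d (h * α) = d h * α - h * d α) :
    d (g + d h + β * h + h * α) =
      (g + d h + β * h + h * α) * α - β * (g + d h + β * h + h * α) := by
  rw [map_add, map_add, map_add, hg, hdd, hβh, hhα, hα, hβ]
  noncomm_ring

/-- For `g` invertible, the gauge condition `g α g⁻¹ + g d(g⁻¹) = β` is equivalent to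
the inverse-free equation `d g = g α - β g`, which is how it is encoded here both
in the hypothesis on `g = 1 + u` and in the conclusion on `g'`. -/
theorem statement_3_general
    (k : Type) [Field k] (B : Type) [Ring B] [Algebra k B]
    (𝒜 : ℤ → Submodule k B) (d : B →ₗ[k] B)
    (hmul : ∀ i j : ℤ, ∀ a ∈ 𝒜 i, ∀ b ∈ 𝒜 j, a * b ∈ 𝒜 (i + j))
    (hd_deg : ∀ i : ℤ, ∀ a ∈ 𝒜 i, d a ∈ 𝒜 (i + 1))
    (hd_sq : ∀ a : B, d (d a) = 0)
    (hleib : ∀ i : ℤ, ∀ a ∈ 𝒜 i, ∀ b : B,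
      d (a * b) = d a * b + ((-1 : k) ^ i) • (a * d b))
    (I : Ideal B)
    (hId : ∀ a ∈ I, d a ∈ I)
    -- α, β ∈ MC(I):
    (α β : B)
    (hαI : α ∈ I) (hα1 : α ∈ 𝒜 1) (hαMC : d α + α * α = 0)
    (hβ1 : β ∈ 𝒜 1) (hβMC : d β + β * β = 0)
    -- g = 1 + u ∈ 1 + I⁰ with g · α = β:
    (u : B) (huI : u ∈ I) (hu0 : u ∈ 𝒜 0)
    (hgauge : d (1 + u) = (1 + u) * α - β * (1 + u))
    -- h ∈ I⁻¹:
    (h : B) (hhI : h ∈ I) (hh : h ∈ 𝒜 (-1)) :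
    d ((1 + u) + d h + β * h + h * α) =
        ((1 + u) + d h + β * h + h * α) * α -
          β * ((1 + u) + d h + β * h + h * α) ∧
      ((1 + u) + d h + β * h + h * α) - 1 ∈ I ∧
      ((1 + u) + d h + β * h + h * α) - 1 ∈ 𝒜 0 := by
  have hsub : (1 + u) + d h + β * h + h * α - 1 = u + d h + β * h + h * α := by noncomm_ring
  refine ⟨gauge_add_twisted_differential d.toAddMonoidHom (eq_neg_of_add_eq_zero_left hαMC)
    (eq_neg_of_add_eq_zero_left hβMC) hgauge (hd_sq h) (map_mul_of_odd hleib odd_one hβ1 h)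
    (map_mul_of_odd hleib (by decide) hh α), ?_, ?_⟩ <;> rw [hsub]
  · exact add_mem (add_mem (add_mem huI (hId h hhI)) (I.mul_mem_left β hhI))
      (I.mul_mem_left h hαI)
  · have hdh : d h ∈ 𝒜 0 := by simpa using hd_deg (-1) h hh
    have hβh : β * h ∈ 𝒜 0 := by simpa using hmul 1 (-1) β hβ1 h hh
    have hhα : h * α ∈ 𝒜 0 := by simpa using hmul (-1) 1 h hh α hα1
    exact add_mem (add_mem (add_mem hu0 hdh) hβh) hhα

/-- Let `B` be a DG algebra, `I` a nilpotent DG ideal of `B`, and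
`α, β ∈ MC(I)`.  If `g ∈ 1 + I⁰` satisfies `g · α = β` (gauge action), then for any
`h ∈ I⁻¹`, the element `g' = g + d h + β h + h α` also satisfies `g' · α = β`
(and again `g' ∈ 1 + I⁰`).

For `g` invertible, the gauge condition `g α g⁻¹ + g d(g⁻¹) = β` is equivalent to
the inverse-free equation `d g = g α - β g`, which is how it is encoded here both
in the hypothesis on `g = 1 + u` and in the conclusion on `g'`. -/
theorem statement_3
    (k : Type) [Field k] (B : Type) [Ring B] [Algebra k B]
    (𝒜 : ℤ → Submodule k B) (d : B →ₗ[k] B)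
    (hone : (1 : B) ∈ 𝒜 0)
    (hmul : ∀ i j : ℤ, ∀ a ∈ 𝒜 i, ∀ b ∈ 𝒜 j, a * b ∈ 𝒜 (i + j))
    (hd_deg : ∀ i : ℤ, ∀ a ∈ 𝒜 i, d a ∈ 𝒜 (i + 1))
    (hd_sq : ∀ a : B, d (d a) = 0)
    (hd_one : d (1 : B) = 0)
    (hleib : ∀ i : ℤ, ∀ a ∈ 𝒜 i, ∀ b : B,
      d (a * b) = d a * b + ((-1 : k) ^ i) • (a * d b))
    (I : Ideal B)
    (hIright : ∀ a ∈ I, ∀ r : B, a * r ∈ I)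
    (hId : ∀ a ∈ I, d a ∈ I)
    (hInil : ∃ n : ℕ, ∀ l : List B, (∀ x ∈ l, x ∈ I) → l.length = n + 1 → l.prod = 0)
    -- α, β ∈ MC(I):
    (α β : B)
    (hαI : α ∈ I) (hα1 : α ∈ 𝒜 1) (hαMC : d α + α * α = 0)
    (hβI : β ∈ I) (hβ1 : β ∈ 𝒜 1) (hβMC : d β + β * β = 0)
    -- g = 1 + u ∈ 1 + I⁰ with g · α = β:
    (u : B) (huI : u ∈ I) (hu0 : u ∈ 𝒜 0)
    (hgauge : d (1 + u) = (1 + u) * α - β * (1 + u))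
    -- h ∈ I⁻¹:
    (h : B) (hhI : h ∈ I) (hh : h ∈ 𝒜 (-1)) :
    d ((1 + u) + d h + β * h + h * α) =
        ((1 + u) + d h + β * h + h * α) * α -
          β * ((1 + u) + d h + β * h + h * α) ∧
      ((1 + u) + d h + β * h + h * α) - 1 ∈ I ∧
      ((1 + u) + d h + β * h + h * α) - 1 ∈ 𝒜 0 :=
  statement_3_general k B 𝒜 d hmul hd_deg hd_sq hleib I hId α β hαI hα1 hαMC hβ1 hβMC u huI hu0
    hgauge h hhI hh
end

section
/- In the setting of obstruction theory: with B a DG algebra, R artinian with m^{n+1}=0, I = m^n, if α̃, α̃' ∈ (B ⊗ m)^1 are two lifts of the same α ∈ MC(B ⊗ m/I), then Q(α̃') − Q(α̃) = d(α̃' − α̃). Hence the cohomology class o₂(α) := [Q(α̃)] ∈ H²(B ⊗ I) is independent of the choice of lift. -/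
/-! Since `b - a` lies in `J` and `J·N = N·J = 0`, both `(b - a) * b` and `a * (b - a)` vanish, and
`b * b - a * a` is their sum; so the quadratic parts of `Q b` and `Q a` agree and only the linear
part `d (b - a)` survives. -/

theorem mul_self_eq_mul_self_of_sub_mul_eq_zero {R : Type*} [NonUnitalNonAssocRing R] {a b : R}
    (hright : (b - a) * b = 0) (hleft : a * (b - a) = 0) : b * b = a * a := by
  rw [← sub_eq_zero]
  calc b * b - a * a = (b - a) * b + a * (b - a) := by noncomm_ring
    _ = 0 := by rw [hright, hleft, add_zero]

-- `T = B ⊗ R`, `N = B ⊗ m`, `J = B ⊗ I`; `hJNzero` encodes `I·m = m·I = 0`.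
theorem statement_5_general
    (k : Type) [Field k] (T : Type) [Ring T] [Algebra k T]
    (d : T →ₗ[k] T)
    (N J : Submodule k T)
    (hJNzero : ∀ x ∈ J, ∀ y ∈ N, x * y = 0 ∧ y * x = 0)
    -- the two lifts:
    (α' α'' : T)
    (hαN : α' ∈ N)
    (hα'N : α'' ∈ N)
    (hsame : α'' - α' ∈ J) :
    (d α'' + α'' * α'') - (d α' + α' * α') = d (α'' - α') := by
  have hsq : α'' * α'' = α' * α' := mul_self_eq_mul_self_of_sub_mul_eq_zero
    (hJNzero _ hsame _ hα'N).1 (hJNzero _ hsame _ hαN).2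
  rw [map_sub, hsq]
  abel

/-- (Independence of the obstruction class of the lift.)
Setting as in the obstruction theory: `B` a DG algebra, `R` artinian with
`m^(n+1) = 0`, `I = mⁿ`.  If `α̃, α̃' ∈ (B ⊗ m)¹` are two lifts of the same
`α ∈ MC(B ⊗ m/I)`, then `Q(α̃') − Q(α̃) = d(α̃' − α̃)`.  Hence the cohomology class
`o₂(α) = [Q(α̃)] ∈ H²(B ⊗ I)` is independent of the choice of lift.

Encoding: `T = B ⊗ R` is a DG algebra with grading `𝒜` and differential `d`;
`N = B ⊗ m` and `J = B ⊗ I` are two-sided DG ideals with `J ≤ N` and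
`J·N = N·J = 0` (since `I·m = m·I = 0`); `Q x = d x + x * x`.  "Two lifts of the
same Maurer–Cartan element of the quotient by `J`" means `α̃' − α̃ ∈ J` together
with `Q(α̃) ∈ J`. -/
theorem statement_5
    (k : Type) [Field k] (T : Type) [Ring T] [Algebra k T]
    (𝒜 : ℤ → Submodule k T) (d : T →ₗ[k] T)
    (hone : (1 : T) ∈ 𝒜 0)
    (hmul : ∀ i j : ℤ, ∀ a ∈ 𝒜 i, ∀ b ∈ 𝒜 j, a * b ∈ 𝒜 (i + j))
    (hd_deg : ∀ i : ℤ, ∀ a ∈ 𝒜 i, d a ∈ 𝒜 (i + 1))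
    (hd_sq : ∀ a : T, d (d a) = 0)
    (hd_one : d (1 : T) = 0)
    (hleib : ∀ i : ℤ, ∀ a ∈ 𝒜 i, ∀ b : T,
      d (a * b) = d a * b + ((-1 : k) ^ i) • (a * d b))
    (N J : Submodule k T)
    (hJN : J ≤ N)
    (hNleft : ∀ a ∈ N, ∀ r : T, r * a ∈ N) (hNright : ∀ a ∈ N, ∀ r : T, a * r ∈ N)
    (hJleft : ∀ a ∈ J, ∀ r : T, r * a ∈ J) (hJright : ∀ a ∈ J, ∀ r : T, a * r ∈ J)
    (hNd : ∀ a ∈ N, d a ∈ N) (hJd : ∀ a ∈ J, d a ∈ J)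
    (hJNzero : ∀ x ∈ J, ∀ y ∈ N, x * y = 0 ∧ y * x = 0)
    -- the two lifts:
    (α' α'' : T)
    (hαN : α' ∈ N) (hα1 : α' ∈ 𝒜 1)
    (hα'N : α'' ∈ N) (hα'1 : α'' ∈ 𝒜 1)
    (hsame : α'' - α' ∈ J)
    (hlift : d α' + α' * α' ∈ J) :
    (d α'' + α'' * α'') - (d α' + α' * α') = d (α'' - α') :=
  statement_5_general k T d N J hJNzero α' α'' hαN hα'N hsame
end

section
/- Obstruction vanishing implies lifting: let B be a DG algebra, R artinian with m^{n+1} = 0, I = m^n. Let α ∈ MC(B ⊗ m/I) and α̃ ∈ (B ⊗ m)^1 a lift. If Q(α̃) = dτ for some τ ∈ (B ⊗ I)^1, then α̃' := α̃ − τ satisfies Q(α̃') = 0, i.e. α̃' ∈ MC(B ⊗ m) lifts α. -/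
theorem sub_mul_sub_self_eq_mul_self {R : Type*} [NonUnitalNonAssocRing R] {x t : R}
    (hxt : x * t = 0) (htx : t * x = 0) (htt : t * t = 0) : (x - t) * (x - t) = x * x := by
  rw [sub_mul, mul_sub, mul_sub, hxt, htx, htt]
  abel

theorem map_sub_add_sub_mul_self {R F : Type*} [NonUnitalNonAssocRing R] [FunLike F R R]
    [AddMonoidHomClass F R R] (d : F) {x t : R}
    (hxt : x * t = 0) (htx : t * x = 0) (htt : t * t = 0) :
    d (x - t) + (x - t) * (x - t) = d x + x * x - d t := by
  rw [sub_mul_sub_self_eq_mul_self hxt htx htt, map_sub]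
  abel

theorem statement_6_general
    (k : Type) [Field k] (T : Type) [Ring T] [Algebra k T]
    (𝒜 : ℤ → Submodule k T) (d : T →ₗ[k] T)
    (N J : Submodule k T)
    (hJN : J ≤ N)
    (hJNzero : ∀ x ∈ J, ∀ y ∈ N, x * y = 0 ∧ y * x = 0)
    -- the lift and the primitive of the obstruction cocycle:
    (α' τ : T) (hαN : α' ∈ N) (hα1 : α' ∈ 𝒜 1)
    (hτJ : τ ∈ J) (hτ1 : τ ∈ 𝒜 1)
    (hQ : d α' + α' * α' = d τ) :
    d (α' - τ) + (α' - τ) * (α' - τ) = 0 ∧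
      α' - τ ∈ N ∧ α' - τ ∈ 𝒜 1 ∧ (α' - τ) - α' ∈ J := by
  obtain ⟨hτα, hατ⟩ := hJNzero τ hτJ α' hαN
  have hττ : τ * τ = 0 := (hJNzero τ hτJ τ (hJN hτJ)).1
  refine ⟨?_, N.sub_mem hαN (hJN hτJ), (𝒜 1).sub_mem hα1 hτ1, ?_⟩
  · rw [map_sub_add_sub_mul_self d hατ hτα hττ, hQ, sub_self]
  · rw [sub_sub_cancel_left]
    exact J.neg_mem hτJ

/-- (Vanishing of the obstruction implies lifting.)
Let `B` be a DG algebra, `R` artinian with `m^(n+1) = 0`, `I = mⁿ`.  Let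
`α ∈ MC(B ⊗ m/I)` and `α̃ ∈ (B ⊗ m)¹` a lift.  If `Q(α̃) = d τ` for some
`τ ∈ (B ⊗ I)¹`, then `α̃' := α̃ − τ` satisfies `Q(α̃') = 0`, i.e.
`α̃' ∈ MC(B ⊗ m)` lifts `α`.

Encoding: `T = B ⊗ R` is a DG algebra with grading `𝒜` and differential `d`;
`N = B ⊗ m` and `J = B ⊗ I` are two-sided DG ideals with `J ≤ N` and
`J·N = N·J = 0`; `Q x = d x + x * x`; "`α̃ − τ` lifts `α`" is expressed by
`(α̃ − τ) − α̃ ∈ J` (same class mod `J`). -/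
theorem statement_6
    (k : Type) [Field k] (T : Type) [Ring T] [Algebra k T]
    (𝒜 : ℤ → Submodule k T) (d : T →ₗ[k] T)
    (hone : (1 : T) ∈ 𝒜 0)
    (hmul : ∀ i j : ℤ, ∀ a ∈ 𝒜 i, ∀ b ∈ 𝒜 j, a * b ∈ 𝒜 (i + j))
    (hd_deg : ∀ i : ℤ, ∀ a ∈ 𝒜 i, d a ∈ 𝒜 (i + 1))
    (hd_sq : ∀ a : T, d (d a) = 0)
    (hd_one : d (1 : T) = 0)
    (hleib : ∀ i : ℤ, ∀ a ∈ 𝒜 i, ∀ b : T,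
      d (a * b) = d a * b + ((-1 : k) ^ i) • (a * d b))
    (N J : Submodule k T)
    (hJN : J ≤ N)
    (hNleft : ∀ a ∈ N, ∀ r : T, r * a ∈ N) (hNright : ∀ a ∈ N, ∀ r : T, a * r ∈ N)
    (hJleft : ∀ a ∈ J, ∀ r : T, r * a ∈ J) (hJright : ∀ a ∈ J, ∀ r : T, a * r ∈ J)
    (hNd : ∀ a ∈ N, d a ∈ N) (hJd : ∀ a ∈ J, d a ∈ J)
    (hJNzero : ∀ x ∈ J, ∀ y ∈ N, x * y = 0 ∧ y * x = 0)
    -- the lift and the primitive of the obstruction cocycle: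
    (α' τ : T) (hαN : α' ∈ N) (hα1 : α' ∈ 𝒜 1)
    (hτJ : τ ∈ J) (hτ1 : τ ∈ 𝒜 1)
    (hQ : d α' + α' * α' = d τ) :
    d (α' - τ) + (α' - τ) * (α' - τ) = 0 ∧
      α' - τ ∈ N ∧ α' - τ ∈ 𝒜 1 ∧ (α' - τ) - α' ∈ J :=
  statement_6_general k T 𝒜 d N J hJN hJNzero α' τ hαN hα1 hτJ hτ1 hQ
end

section
/- Nakayama-type rigidity: let R be an artinian DG algebra with maximal nilpotent DG ideal m, A a DG category, and S, T DG A_R^op-modules whose underlying graded modules are of the form (K ⊗ R)^gr (graded R-free). If f : S → T is a closed degree-zero morphism such that i*f := f ⊗_R k is an isomorphism, then f is an isomorphism. -/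
set_option synthInstance.maxHeartbeats 400000
set_option maxHeartbeats 1000000

namespace stmt16

variable (k : Type) [Field k]
variable (A : Type) [Ring A] [Algebra k A] (𝒜 : ℤ → Submodule k A) (dA : A →ₗ[k] A)
variable (R : Type) [Ring R] [Algebra k R] (𝒢 : ℤ → Submodule k R) (dR : R →ₗ[k] R)

/-- A DG `𝒜_R^{op}`-module: a graded complex with commuting right actions of the
DG algebra `A` (playing the role of the DG category `𝒜`) and of the artinian DG
algebra `R`, i.e. a right DG module over `A ⊗ R`. -/
structure ARMod where
  carrier : Type
  [acg : AddCommGroup carrier]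
  [kmod : Module k carrier]
  actA : carrier →ₗ[k] A →ₗ[k] carrier
  actA_one : ∀ m, actA m 1 = m
  actA_mul : ∀ m a a', actA (actA m a) a' = actA m (a * a')
  actR : carrier →ₗ[k] R →ₗ[k] carrier
  actR_one : ∀ m, actR m 1 = m
  actR_mul : ∀ m r r', actR (actR m r) r' = actR m (r * r')
  comm : ∀ i j : ℤ, ∀ a ∈ 𝒜 i, ∀ r ∈ 𝒢 j, ∀ m,
    actA (actR m r) a = ((-1 : k) ^ (i * j)) • actR (actA m a) r
  gr : ℤ → Submodule k carrier
  gr_actA : ∀ i j : ℤ, ∀ m ∈ gr i, ∀ a ∈ 𝒜 j, actA m a ∈ gr (i + j)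
  gr_actR : ∀ i j : ℤ, ∀ m ∈ gr i, ∀ r ∈ 𝒢 j, actR m r ∈ gr (i + j)
  diff : carrier →ₗ[k] carrier
  diff_deg : ∀ i : ℤ, ∀ m ∈ gr i, diff m ∈ gr (i + 1)
  diff_sq : ∀ m, diff (diff m) = 0
  leibA : ∀ i : ℤ, ∀ m ∈ gr i, ∀ a,
    diff (actA m a) = actA (diff m) a + ((-1 : k) ^ i) • actA m (dA a)
  leibR : ∀ i : ℤ, ∀ m ∈ gr i, ∀ r,
    diff (actR m r) = actR (diff m) r + ((-1 : k) ^ i) • actR m (dR r)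

attribute [instance] ARMod.acg ARMod.kmod

variable {k A 𝒜 dA R 𝒢 dR}

/-- `X` is graded `R`-free: its underlying graded module is `(K ⊗ R)^{gr}` for a
graded module `K`, i.e. `X` admits a homogeneous basis over `R^{gr}`. -/
def GradedRFree (X : ARMod k A 𝒜 dA R 𝒢 dR) : Prop :=
  ∃ (ι : Type) (κ : ι → ℤ) (e : ι → X.carrier),
    (∀ i, e i ∈ X.gr (κ i)) ∧
    Function.Bijective
      (fun l : ι →₀ R => l.sum fun i r => X.actR (e i) r) ∧
    ∀ n : ℤ, ∀ x ∈ X.gr n, ∃ l : ι →₀ R,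
      (∀ i, l i ∈ 𝒢 (n - κ i)) ∧ x = l.sum fun i r => X.actR (e i) r

/-- The submodule `X·m` of a module `X`, for `m ⊆ R`. -/
def smulIdeal (X : ARMod k A 𝒜 dA R 𝒢 dR) (m : Ideal R) :
    Submodule k X.carrier :=
  Submodule.span k {x | ∃ s : X.carrier, ∃ r ∈ m, x = X.actR s r}

/-!
Surjectivity is Nakayama's lemma: if `T = im f + T·m` then, pushing the error term through
products of elements of `m`, `T = im f + T·m^j` for every `j`, and `m^(n+1) = 0`.
For injectivity, lift an `R`-basis of `T` along `f` to get an `R`-linear section `h`. Since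
`i^* f ∘ i^* h = id` and `i^* f` is injective, `i^* h` is surjective, so `h` is surjective by
the same lemma, and `f`, being a left inverse of a surjection, is injective.
-/

namespace ARMod

section Nakayama

variable (X : ARMod k A 𝒜 dA R 𝒢 dR) (m : Ideal R)

/-- The submodule `X·m^j`. -/
def smulPow (j : ℕ) : Submodule k X.carrier :=
  Submodule.span k {x | ∃ t : X.carrier, ∃ l : List R,
    (∀ r ∈ l, r ∈ m) ∧ l.length = j ∧ x = X.actR t l.prod}

lemma smulPow_zero : X.smulPow m 0 = ⊤ :=
  eq_top_iff.mpr fun t _ => Submodule.subset_span ⟨t, [], by simp, rfl, by simp [X.actR_one]⟩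

lemma smulPow_eq_bot {n : ℕ}
    (hn : ∀ l : List R, (∀ x ∈ l, x ∈ m) → l.length = n → l.prod = 0) :
    X.smulPow m n = ⊥ := by
  refine le_bot_iff.mp (Submodule.span_le.mpr ?_)
  rintro _ ⟨t, l, hl, hlen, rfl⟩
  simp [hn l hl hlen]

lemma actR_prod_mem_smulPow {u : X.carrier} (hu : u ∈ smulIdeal X m) {l : List R}
    (hl : ∀ r ∈ l, r ∈ m) : X.actR u l.prod ∈ X.smulPow m (l.length + 1) := by
  induction hu using Submodule.span_induction with
  | mem x hx =>
    obtain ⟨t, r, hr, rfl⟩ := hx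
    rw [X.actR_mul]
    exact Submodule.subset_span ⟨t, r :: l, List.forall_mem_cons.mpr ⟨hr, hl⟩, rfl, by simp⟩
  | zero => simp
  | add x y _ _ hx hy => rw [map_add, LinearMap.add_apply]; exact add_mem hx hy
  | smul c x _ hx => rw [map_smul, LinearMap.smul_apply]; exact Submodule.smul_mem _ c hx

variable {X m}

lemma smulPow_le_sup_smulPow_succ {N : Submodule k X.carrier}
    (hN : ∀ x ∈ N, ∀ r, X.actR x r ∈ N) (hsup : N ⊔ smulIdeal X m = ⊤) (j : ℕ) :
    X.smulPow m j ≤ N ⊔ X.smulPow m (j + 1) := by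
  refine Submodule.span_le.mpr ?_
  rintro _ ⟨t, l, hl, rfl, rfl⟩
  obtain ⟨y, hy, u, hu, rfl⟩ := Submodule.mem_sup.mp (hsup ▸ Submodule.mem_top (x := t))
  rw [map_add, LinearMap.add_apply]
  exact add_mem (Submodule.mem_sup_left (hN y hy _))
    (Submodule.mem_sup_right (X.actR_prod_mem_smulPow m hu hl))

theorem eq_top_of_sup_smulIdeal_eq_top
    (hmnil : ∃ n : ℕ, ∀ l : List R, (∀ x ∈ l, x ∈ m) → l.length = n + 1 → l.prod = 0)
    {N : Submodule k X.carrier} (hN : ∀ x ∈ N, ∀ r, X.actR x r ∈ N)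
    (hsup : N ⊔ smulIdeal X m = ⊤) : N = ⊤ := by
  obtain ⟨n, hn⟩ := hmnil
  have hsup_pow : ∀ j, N ⊔ X.smulPow m j = ⊤ := by
    intro j
    induction j with
    | zero => simp [smulPow_zero]
    | succ j ih =>
      exact top_unique (ih ▸ sup_le le_sup_left (smulPow_le_sup_smulPow_succ hN hsup j))
  simpa [smulPow_eq_bot X m hn] using hsup_pow (n + 1)

end Nakayama

variable {X Y : ARMod k A 𝒜 dA R 𝒢 dR}

lemma smulIdeal_le_comap (m : Ideal R) {g : X.carrier →ₗ[k] Y.carrier}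
    (hg : ∀ x r, g (X.actR x r) = Y.actR (g x) r) :
    smulIdeal X m ≤ (smulIdeal Y m).comap g :=
  Submodule.span_le.mpr fun _ ⟨x, r, hr, hx⟩ => Submodule.subset_span ⟨g x, r, hr, hx ▸ hg x r⟩

theorem surjective_of_surjective_mapQ {m : Ideal R}
    (hmnil : ∃ n : ℕ, ∀ l : List R, (∀ x ∈ l, x ∈ m) → l.length = n + 1 → l.prod = 0)
    {g : X.carrier →ₗ[k] Y.carrier} (hg : ∀ x r, g (X.actR x r) = Y.actR (g x) r)
    (hle : smulIdeal X m ≤ (smulIdeal Y m).comap g)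
    (hsurj : Function.Surjective (Submodule.mapQ (smulIdeal X m) (smulIdeal Y m) g hle)) :
    Function.Surjective g := by
  have hrange : LinearMap.range g ⊔ smulIdeal Y m = ⊤ := by
    rw [sup_comm, ← Submodule.map_mkQ_eq_top, ← Submodule.range_mapQ _ _ g hle]
    exact LinearMap.range_eq_top.mpr hsurj
  refine LinearMap.range_eq_top.mp (eq_top_of_sup_smulIdeal_eq_top hmnil ?_ hrange)
  rintro _ ⟨x, rfl⟩ r
  exact ⟨X.actR x r, hg x r⟩

noncomputable def combination {ι : Type} (v : ι → X.carrier) : (ι →₀ R) →ₗ[k] X.carrier :=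
  Finsupp.lsum k fun i => X.actR (v i)

lemma combination_mapRange_mul {ι : Type} (v : ι → X.carrier) (l : ι →₀ R) (r : R) :
    X.combination v (l.mapRange (· * r) (zero_mul r)) = X.actR (X.combination v l) r := by
  simp only [combination, Finsupp.lsum_apply]
  rw [Finsupp.sum_mapRange_index (by simp), ← LinearMap.flip_apply (f := X.actR),
    map_finsuppSum]
  simp [X.actR_mul]

lemma map_combination {ι : Type} {g : X.carrier →ₗ[k] Y.carrier}
    (hg : ∀ x r, g (X.actR x r) = Y.actR (g x) r) (v : ι → X.carrier) (l : ι →₀ R) :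
    g (X.combination v l) = Y.combination (g ∘ v) l := by
  simp [combination, map_finsuppSum, hg]

theorem exists_section_of_gradedRFree (hY : GradedRFree Y) {g : X.carrier →ₗ[k] Y.carrier}
    (hg : ∀ x r, g (X.actR x r) = Y.actR (g x) r) (hsurj : Function.Surjective g) :
    ∃ h : Y.carrier →ₗ[k] X.carrier,
      (∀ y r, h (Y.actR y r) = X.actR (h y) r) ∧ ∀ y, g (h y) = y := by
  obtain ⟨ι, -, e, -, he, -⟩ := hY
  let E := LinearEquiv.ofBijective (Y.combination e) he
  have hE : ∀ l, E l = Y.combination e l := fun _ => rfl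
  choose s hs using fun i => hsurj (e i)
  refine ⟨X.combination s ∘ₗ E.symm.toLinearMap, fun y r => ?_, fun y => ?_⟩
  · have hE_mul : E.symm (Y.actR y r) = (E.symm y).mapRange (· * r) (zero_mul r) := by
      rw [E.symm_apply_eq, hE, combination_mapRange_mul, ← hE, E.apply_symm_apply]
    simp [hE_mul, combination_mapRange_mul]
  · have hgs : g ∘ s = e := funext hs
    simpa [map_combination hg, hgs, hE] using E.apply_symm_apply y

end ARMod

theorem statement_16_general
    -- R is finite dimensional and artinian with maximal DG ideal m:
    (m : Ideal R)
    (hmnil : ∃ n : ℕ, ∀ l : List R, (∀ x ∈ l, x ∈ m) → l.length = n + 1 → l.prod = 0)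
    -- the graded R-free modules S and T:
    (S T : ARMod k A 𝒜 dA R 𝒢 dR)
    (hTfree : GradedRFree T)
    -- the closed degree-zero morphism f:
    (f : S.carrier →ₗ[k] T.carrier)
    (hfR : ∀ s r, f (S.actR s r) = T.actR (f s) r)
    -- i^* f is an isomorphism:
    (hle : smulIdeal S m ≤ Submodule.comap f (smulIdeal T m))
    (hbij : Function.Bijective
      (Submodule.mapQ (smulIdeal S m) (smulIdeal T m) f hle)) :
    Function.Bijective f := by
  have hf_surj : Function.Surjective f := ARMod.surjective_of_surjective_mapQ hmnil hfR hle hbij.2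
  obtain ⟨h, hhR, hfh⟩ := ARMod.exists_section_of_gradedRFree hTfree hfR hf_surj
  have hleh := ARMod.smulIdeal_le_comap m hhR
  have hQ_inv : Function.LeftInverse (Submodule.mapQ _ _ f hle) (Submodule.mapQ _ _ h hleh) := by
    intro q
    induction q using Submodule.Quotient.induction_on
    simp [hfh]
  have hh_surj : Function.Surjective h := ARMod.surjective_of_surjective_mapQ hmnil hhR hleh
    (hQ_inv.rightInverse_of_injective hbij.1).surjective
  exact ⟨(Function.LeftInverse.rightInverse_of_surjective hfh hh_surj).injective, hf_surj⟩

/-- (Nakayama-type rigidity.)  Let `R` be an artinian DG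
algebra with nilpotent maximal DG ideal `m`, `A` a DG algebra (playing the role
of the DG category `𝒜`), and `S, T` DG `A_R^{op}`-modules which are graded
`R`-free.  If `f : S → T` is a closed degree-zero morphism of DG
`A_R^{op}`-modules such that `i^* f = f ⊗_R k` (the induced map
`S/S·m → T/T·m`) is an isomorphism, then `f` is an isomorphism. -/
theorem statement_16
    -- DG algebra axioms for R:
    (honeR : (1 : R) ∈ 𝒢 0)
    (hmulR : ∀ i j : ℤ, ∀ a ∈ 𝒢 i, ∀ b ∈ 𝒢 j, a * b ∈ 𝒢 (i + j))
    (hdR_deg : ∀ i : ℤ, ∀ a ∈ 𝒢 i, dR a ∈ 𝒢 (i + 1))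
    (hdR_sq : ∀ a : R, dR (dR a) = 0) (hdR_one : dR (1 : R) = 0)
    (hdR_leib : ∀ i : ℤ, ∀ a ∈ 𝒢 i, ∀ b : R,
      dR (a * b) = dR a * b + ((-1 : k) ^ i) • (a * dR b))
    -- R is finite dimensional and artinian with maximal DG ideal m:
    [FiniteDimensional k R]
    (m : Ideal R)
    (hmright : ∀ a ∈ m, ∀ r : R, a * r ∈ m)
    (hmd : ∀ a ∈ m, dR a ∈ m)
    (hmnil : ∃ n : ℕ, ∀ l : List R, (∀ x ∈ l, x ∈ m) → l.length = n + 1 → l.prod = 0)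
    (hcodim : ∀ r : R, ∃ c : k, r - algebraMap k R c ∈ m)
    (hproper : (1 : R) ∉ m)
    -- DG algebra axioms for A:
    (honeA : (1 : A) ∈ 𝒜 0)
    (hmulA : ∀ i j : ℤ, ∀ a ∈ 𝒜 i, ∀ b ∈ 𝒜 j, a * b ∈ 𝒜 (i + j))
    (hdA_deg : ∀ i : ℤ, ∀ a ∈ 𝒜 i, dA a ∈ 𝒜 (i + 1))
    (hdA_sq : ∀ a : A, dA (dA a) = 0) (hdA_one : dA (1 : A) = 0)
    (hdA_leib : ∀ i : ℤ, ∀ a ∈ 𝒜 i, ∀ b : A,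
      dA (a * b) = dA a * b + ((-1 : k) ^ i) • (a * dA b))
    -- the graded R-free modules S and T:
    (S T : ARMod k A 𝒜 dA R 𝒢 dR)
    (hSfree : GradedRFree S) (hTfree : GradedRFree T)
    -- the closed degree-zero morphism f:
    (f : S.carrier →ₗ[k] T.carrier)
    (hfA : ∀ s a, f (S.actA s a) = T.actA (f s) a)
    (hfR : ∀ s r, f (S.actR s r) = T.actR (f s) r)
    (hfgr : ∀ i : ℤ, ∀ s ∈ S.gr i, f s ∈ T.gr i)
    (hfd : ∀ s, f (S.diff s) = T.diff (f s))
    -- i^* f is an isomorphism: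
    (hle : smulIdeal S m ≤ Submodule.comap f (smulIdeal T m))
    (hbij : Function.Bijective
      (Submodule.mapQ (smulIdeal S m) (smulIdeal T m) f hle)) :
    Function.Bijective f :=
  statement_16_general m hmnil S T hTfree f hfR hle hbij

end stmt16
end
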